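/- arXiv:1707.09200 — 6 statements merged into one kernel-verified Lean document; each statement's English description precedes it below -/
import Mathlib

section
/- Let X be a quasi-Banach space, Y a γ-Banach space (0 < γ ≤ 1), and T : X → Y a bounded linear operator. Then 2^{1-1/γ}‖T‖ ≤ e₁(T) ≤ ‖T‖, where e₁(T) is the first outer entropy number of T, i.e., the infimum of all ε > 0 such that T(B_X) is contained in a single ball of radius ε in Y. -/
open scoped BigOperators ENNReal

noncomputable section

/-- A γ-norm on a real vector space. -/
def IsGammaNorm {Y : Type*} [AddCommGroup Y] [Module ℝ Y] (γ : ℝ) (N : Y → ℝ) : Prop :=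
  (∀ y, 0 ≤ N y) ∧ (∀ y, N y = 0 ↔ y = 0) ∧
    (∀ (a : ℝ) (y : Y), N (a • y) = |a| * N y) ∧
    (∀ y z, N (y + z) ^ γ ≤ N y ^ γ + N z ^ γ)

/-- A quasi-norm with constant `C` on a real vector space. -/
def IsQuasiNorm {X : Type*} [AddCommGroup X] [Module ℝ X] (C : ℝ) (N : X → ℝ) : Prop :=
  1 ≤ C ∧ (∀ x, 0 ≤ N x) ∧ (∀ x, N x = 0 ↔ x = 0) ∧
    (∀ (a : ℝ) (x : X), N (a • x) = |a| * N x) ∧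
    (∀ x y, N (x + y) ≤ C * (N x + N y))

/-- Completeness with respect to a (quasi/γ-)norm `N`. -/
def NormComplete {Y : Type*} [AddCommGroup Y] (N : Y → ℝ) : Prop :=
  ∀ f : ℕ → Y,
    (∀ ε : ℝ, 0 < ε → ∃ n₀ : ℕ, ∀ m n, n₀ ≤ m → n₀ ≤ n → N (f m - f n) < ε) →
    ∃ y : Y, ∀ ε : ℝ, 0 < ε → ∃ n₀ : ℕ, ∀ n, n₀ ≤ n → N (f n - y) < ε

/-- Operator norm of a linear map w.r.t. norms `NX`, `NY`. -/
def opNorm {X Y : Type*} [AddCommGroup X] [Module ℝ X] [AddCommGroup Y] [Module ℝ Y]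
    (NX : X → ℝ) (NY : Y → ℝ) (T : X →ₗ[ℝ] Y) : ℝ :=
  sSup {r : ℝ | ∃ x : X, NX x ≤ 1 ∧ r = NY (T x)}

/-- The `k`-th (dyadic) outer entropy number of `T`. -/
def entropy {X Y : Type*} [AddCommGroup X] [Module ℝ X] [AddCommGroup Y] [Module ℝ Y]
    (NX : X → ℝ) (NY : Y → ℝ) (T : X →ₗ[ℝ] Y) (k : ℕ) : ℝ :=
  sInf {ε : ℝ | 0 < ε ∧ ∃ c : Fin (2 ^ (k - 1)) → Y,
    ∀ x : X, NX x ≤ 1 → ∃ i, NY (T x - c i) ≤ ε}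

/-- The `k`-th (dyadic) inner entropy number of `T`. -/
def innerEntropy {X Y : Type*} [AddCommGroup X] [Module ℝ X] [AddCommGroup Y] [Module ℝ Y]
    (NX : X → ℝ) (NY : Y → ℝ) (T : X →ₗ[ℝ] Y) (k : ℕ) : ℝ :=
  sSup {ε : ℝ | 0 < ε ∧ ∃ p : Fin (2 ^ (k - 1) + 1) → X,
    (∀ i, NX (p i) ≤ 1) ∧ ∀ i j, i ≠ j → 2 * ε ≤ NY (T (p i) - T (p j))}

/-!
A ball centred at `0` of radius slightly above `‖T‖` covers `T(B_X)`, giving `e₁(T) ≤ ‖T‖`.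
Conversely, if one ball `B(c, ε)` covers `T(B_X)`, it contains both `T x - c` and
`T (-x) - c = -T x - c` for `x ∈ B_X`, and the γ-triangle inequality applied to their difference
`2 • T x` gives `2 ‖T x‖ ≤ 2^{1/γ} ε`.
-/

/-- `entropy NX NY T k` is, definitionally, the infimum of the radii `ε` with this property. -/
def IsCoveringRadius {X Y : Type*} [AddCommGroup X] [Module ℝ X] [AddCommGroup Y] [Module ℝ Y]
    (NX : X → ℝ) (NY : Y → ℝ) (T : X →ₗ[ℝ] Y) (k : ℕ) (ε : ℝ) : Prop :=
  0 < ε ∧ ∃ c : Fin (2 ^ (k - 1)) → Y, ∀ x : X, NX x ≤ 1 → ∃ i, NY (T x - c i) ≤ ε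

lemma apply_neg_of_abs_homogeneous {Y : Type*} [AddCommGroup Y] [Module ℝ Y] {N : Y → ℝ}
    (hN : ∀ (a : ℝ) (y : Y), N (a • y) = |a| * N y) (y : Y) : N (-y) = N y := by
  rw [← neg_one_smul ℝ y, hN, abs_neg, abs_one, one_mul]

lemma IsGammaNorm.add_le_two_rpow_mul {Y : Type*} [AddCommGroup Y] [Module ℝ Y] {γ ε : ℝ}
    {N : Y → ℝ} (hN : IsGammaNorm γ N) (hγ : 0 < γ) {y z : Y} (hy : N y ≤ ε) (hz : N z ≤ ε) :
    N (y + z) ≤ 2 ^ (1 / γ) * ε := by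
  obtain ⟨hnonneg, -, -, htri⟩ := hN
  have hε : 0 ≤ ε := (hnonneg y).trans hy
  have hpow : (2 ^ (1 / γ) * ε) ^ γ = 2 * ε ^ γ := by
    rw [Real.mul_rpow (by positivity) hε, ← Real.rpow_mul zero_le_two, one_div_mul_cancel hγ.ne',
      Real.rpow_one]
  rw [← Real.rpow_le_rpow_iff (hnonneg _) (by positivity) hγ, hpow]
  linarith [htri y z, Real.rpow_le_rpow (hnonneg y) hy hγ.le,
    Real.rpow_le_rpow (hnonneg z) hz hγ.le]

section OperatorNorm

variable {X Y : Type*} [AddCommGroup X] [Module ℝ X] [AddCommGroup Y] [Module ℝ Y]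
  {NX : X → ℝ} {NY : Y → ℝ} {T : X →ₗ[ℝ] Y}

lemma opNorm_nonneg (hNY : ∀ y, 0 ≤ NY y) : 0 ≤ opNorm NX NY T :=
  Real.sSup_nonneg fun _ ⟨x, _, hr⟩ => hr ▸ hNY (T x)

lemma le_opNorm (hNX : ∀ x, 0 ≤ NX x) (hT : ∃ M : ℝ, ∀ x, NY (T x) ≤ M * NX x) {x : X}
    (hx : NX x ≤ 1) : NY (T x) ≤ opNorm NX NY T := by
  obtain ⟨M, hM⟩ := hT
  refine le_csSup ⟨max M 0, ?_⟩ ⟨x, hx, rfl⟩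
  rintro _ ⟨x', hx', rfl⟩
  calc NY (T x') ≤ M * NX x' := hM x'
    _ ≤ max M 0 * 1 := mul_le_mul (le_max_left _ _) hx' (hNX x') (le_max_right _ _)
    _ = max M 0 := mul_one _

lemma isCoveringRadius_of_opNorm_lt (hNX : ∀ x, 0 ≤ NX x) (hNY : ∀ y, 0 ≤ NY y)
    (hT : ∃ M : ℝ, ∀ x, NY (T x) ≤ M * NX x) (k : ℕ) {ε : ℝ} (hε : opNorm NX NY T < ε) :
    IsCoveringRadius NX NY T k ε :=
  ⟨(opNorm_nonneg hNY).trans_lt hε, fun _ => 0, fun x hx =>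
    ⟨⟨0, by positivity⟩, by rw [sub_zero]; exact (le_opNorm hNX hT hx).trans hε.le⟩⟩

lemma entropy_le_opNorm (hNX : ∀ x, 0 ≤ NX x) (hNY : ∀ y, 0 ≤ NY y)
    (hT : ∃ M : ℝ, ∀ x, NY (T x) ≤ M * NX x) (k : ℕ) : entropy NX NY T k ≤ opNorm NX NY T :=
  le_of_forall_gt_imp_ge_of_dense fun _ hε =>
    csInf_le ⟨0, fun _ h => h.1.le⟩ (isCoveringRadius_of_opNorm_lt hNX hNY hT k hε)

lemma opNorm_le_of_isCoveringRadius_one {γ ε : ℝ} (hγ : 0 < γ)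
    (hNX : ∀ x, NX (-x) = NX x) (hNY : IsGammaNorm γ NY) (hε : IsCoveringRadius NX NY T 1 ε) :
    opNorm NX NY T ≤ 2 ^ (1 / γ - 1) * ε := by
  obtain ⟨hε, c, hc⟩ := hε
  refine Real.sSup_le ?_ (by positivity)
  rintro _ ⟨x, hx, rfl⟩
  obtain ⟨i, hi⟩ := hc x hx
  obtain ⟨j, hj⟩ := hc (-x) ((hNX x).trans_le hx)
  obtain rfl : j = i := Subsingleton.elim (α := Fin 1) j i
  have hneg := apply_neg_of_abs_homogeneous hNY.2.2.1
  have hsum : NY (T x - c j + -(T (-x) - c j)) ≤ 2 ^ (1 / γ) * ε :=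
    hNY.add_le_two_rpow_mul hγ hi ((hneg _).trans_le hj)
  have htwo : T x - c j + -(T (-x) - c j) = (2 : ℝ) • T x := by
    rw [map_neg, two_smul]; abel
  rw [htwo, hNY.2.2.1, abs_two] at hsum
  rw [Real.rpow_sub_one two_ne_zero]
  linarith

end OperatorNorm

theorem first_entropy_bounds_general {X Y : Type*} [AddCommGroup X] [Module ℝ X]
    [AddCommGroup Y] [Module ℝ Y] (γ C : ℝ) (hγ : 0 < γ)
    (NX : X → ℝ) (NY : Y → ℝ)
    (hNX : IsQuasiNorm C NX)
    (hNY : IsGammaNorm γ NY)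
    (T : X →ₗ[ℝ] Y) (hT : ∃ M : ℝ, ∀ x, NY (T x) ≤ M * NX x) :
    (2 : ℝ) ^ (1 - 1/γ) * opNorm NX NY T ≤ entropy NX NY T 1 ∧
      entropy NX NY T 1 ≤ opNorm NX NY T := by
  have hNX_nonneg := hNX.2.1
  have hNX_neg := apply_neg_of_abs_homogeneous hNX.2.2.2.1
  refine ⟨le_csInf ⟨_, isCoveringRadius_of_opNorm_lt hNX_nonneg hNY.1 hT 1 (lt_add_one _)⟩ ?_,
    entropy_le_opNorm hNX_nonneg hNY.1 hT 1⟩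
  intro ε hε
  calc (2 : ℝ) ^ (1 - 1/γ) * opNorm NX NY T
      ≤ 2 ^ (1 - 1/γ) * (2 ^ (1 / γ - 1) * ε) :=
        mul_le_mul_of_nonneg_left (opNorm_le_of_isCoveringRadius_one hγ hNX_neg hNY hε)
          (by positivity)
    _ = ε := by rw [← mul_assoc, ← Real.rpow_add two_pos]; norm_num

theorem first_entropy_bounds {X Y : Type*} [AddCommGroup X] [Module ℝ X]
    [AddCommGroup Y] [Module ℝ Y] (γ C : ℝ) (hγ : 0 < γ) (hγ1 : γ ≤ 1)
    (NX : X → ℝ) (NY : Y → ℝ)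
    (hNX : IsQuasiNorm C NX) (hXc : NormComplete NX)
    (hNY : IsGammaNorm γ NY) (hYc : NormComplete NY)
    (T : X →ₗ[ℝ] Y) (hT : ∃ M : ℝ, ∀ x, NY (T x) ≤ M * NX x) :
    (2 : ℝ) ^ (1 - 1/γ) * opNorm NX NY T ≤ entropy NX NY T 1 ∧
      entropy NX NY T 1 ≤ opNorm NX NY T :=
  first_entropy_bounds_general γ C hγ NX NY hNX hNY T hT
end
end

section
/- Let I : ℓ_γ → ℓ_γ be the identity map on the sequence space ℓ_γ for 0 < γ ≤ 1. Then for every k ∈ ℕ, the k-th inner entropy number satisfies f_k(I) ≥ 2^{1/γ - 1} = 2^{1/γ - 1}‖I‖. -/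
noncomputable section

/-- Membership in the sequence space `ℓ_γ`. -/
def Memlg (γ : ℝ) (x : ℕ → ℝ) : Prop := Summable fun i => |x i| ^ γ

/-- The `ℓ_γ` γ-norm. -/
def lgNorm (γ : ℝ) (x : ℕ → ℝ) : ℝ := (∑' i, |x i| ^ γ) ^ (1/γ)

/-!
The `2 ^ (k - 1) + 1` unit vectors `e i` lie in the unit ball and satisfy
`∑ |e i - e j| ^ γ = 2`, i.e. `‖e i - e j‖ = 2 ^ (1/γ) = 2 * 2 ^ (1/γ - 1)`, so `2 ^ (1/γ - 1)`
belongs to the set whose supremum is taken. That set is bounded above (otherwise its `sSup`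
would be the junk value `0`) because any two points of the
unit ball are at distance at most `2 * 2 ^ (1/γ)`, from the pointwise estimate
`|a - b| ^ γ ≤ 2 ^ γ * (|a| ^ γ + |b| ^ γ)`.
-/

open Real

def innerEntropySet (γ : ℝ) (n : ℕ) : Set ℝ :=
  {ε | 0 < ε ∧ ∃ p : Fin n → (ℕ → ℝ),
    (∀ i, Memlg γ (p i) ∧ lgNorm γ (p i) ≤ 1) ∧ ∀ i j, i ≠ j → 2 * ε ≤ lgNorm γ (p i - p j)}

section

variable {γ : ℝ}

lemma lgNorm_nonneg (x : ℕ → ℝ) : 0 ≤ lgNorm γ x :=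
  rpow_nonneg (tsum_nonneg fun _ => by positivity) _

lemma lgNorm_rpow (hγ : γ ≠ 0) (x : ℕ → ℝ) : lgNorm γ x ^ γ = ∑' i, |x i| ^ γ := by
  rw [lgNorm, one_div, rpow_inv_rpow (tsum_nonneg fun _ => by positivity) hγ]

lemma abs_sub_rpow_le (hγ : 0 ≤ γ) (a b : ℝ) :
    |a - b| ^ γ ≤ 2 ^ γ * (|a| ^ γ + |b| ^ γ) := by
  wlog hab : |b| ≤ |a| generalizing a b
  · rw [abs_sub_comm, add_comm]
    exact this b a (le_of_not_ge hab)
  calc |a - b| ^ γ ≤ (2 * |a|) ^ γ :=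
        rpow_le_rpow (abs_nonneg _) (by linarith [abs_sub a b]) hγ
    _ = 2 ^ γ * |a| ^ γ := mul_rpow zero_le_two (abs_nonneg a)
    _ ≤ 2 ^ γ * (|a| ^ γ + |b| ^ γ) := by
        gcongr
        exact le_add_of_nonneg_right (by positivity)

lemma tsum_abs_sub_rpow_le (hγ : 0 ≤ γ) {x y : ℕ → ℝ} (hx : Memlg γ x) (hy : Memlg γ y) :
    ∑' i, |(x - y) i| ^ γ ≤ 2 ^ γ * (∑' i, |x i| ^ γ + ∑' i, |y i| ^ γ) := by
  have hbound : Summable fun i => 2 ^ γ * (|x i| ^ γ + |y i| ^ γ) := (hx.add hy).mul_left _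
  calc ∑' i, |(x - y) i| ^ γ ≤ ∑' i, 2 ^ γ * (|x i| ^ γ + |y i| ^ γ) :=
        Summable.tsum_le_tsum (fun i => abs_sub_rpow_le hγ (x i) (y i))
          (hbound.of_nonneg_of_le (fun _ => by positivity) fun i => abs_sub_rpow_le hγ _ _) hbound
    _ = 2 ^ γ * (∑' i, |x i| ^ γ + ∑' i, |y i| ^ γ) := by rw [tsum_mul_left, hx.tsum_add hy]

lemma lgNorm_sub_le (hγ : 0 < γ) {x y : ℕ → ℝ} (hx : Memlg γ x) (hy : Memlg γ y)
    (hx1 : lgNorm γ x ≤ 1) (hy1 : lgNorm γ y ≤ 1) : lgNorm γ (x - y) ≤ 2 * 2 ^ (1 / γ) := by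
  have hsum_le_one : ∀ z : ℕ → ℝ, lgNorm γ z ≤ 1 → ∑' i, |z i| ^ γ ≤ 1 := fun z hz =>
    lgNorm_rpow hγ.ne' z ▸ rpow_le_one (lgNorm_nonneg z) hz hγ.le
  rw [← rpow_le_rpow_iff (lgNorm_nonneg _) (by positivity) hγ, lgNorm_rpow hγ.ne',
    mul_rpow zero_le_two (by positivity), one_div, rpow_inv_rpow zero_le_two hγ.ne']
  calc ∑' i, |(x - y) i| ^ γ ≤ 2 ^ γ * (∑' i, |x i| ^ γ + ∑' i, |y i| ^ γ) :=
        tsum_abs_sub_rpow_le hγ.le hx hy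
    _ ≤ 2 ^ γ * 2 := by
        gcongr
        linarith [hsum_le_one x hx1, hsum_le_one y hy1]

lemma innerEntropySet_bddAbove (hγ : 0 < γ) {n : ℕ} (hn : 2 ≤ n) :
    BddAbove (innerEntropySet γ n) := by
  refine ⟨2 ^ (1 / γ), ?_⟩
  rintro ε ⟨-, p, hp, hsep⟩
  let i₀ : Fin n := ⟨0, by omega⟩
  let i₁ : Fin n := ⟨1, by omega⟩
  have hε := hsep i₀ i₁ (by simp [i₀, i₁, Fin.ext_iff])
  have hdist := lgNorm_sub_le hγ (hp i₀).1 (hp i₁).1 (hp i₀).2 (hp i₁).2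
  linarith

lemma abs_single_rpow (hγ : γ ≠ 0) (i n : ℕ) :
    |(Pi.single i 1 : ℕ → ℝ) n| ^ γ = (Pi.single i 1 : ℕ → ℝ) n := by
  rcases eq_or_ne n i with rfl | h <;> simp [*, zero_rpow hγ]

lemma memlg_single (hγ : γ ≠ 0) (i : ℕ) : Memlg γ (Pi.single i 1) := by
  simpa only [Memlg, abs_single_rpow hγ] using (hasSum_pi_single i (1 : ℝ)).summable

lemma lgNorm_single (hγ : γ ≠ 0) (i : ℕ) : lgNorm γ (Pi.single i 1) = 1 := by
  simp only [lgNorm, abs_single_rpow hγ, tsum_pi_single, one_rpow]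

lemma lgNorm_single_sub_single (hγ : γ ≠ 0) {i j : ℕ} (hij : i ≠ j) :
    lgNorm γ (Pi.single i 1 - Pi.single j 1) = 2 ^ (1 / γ) := by
  have hdisjoint : ∀ n, |(Pi.single i 1 - Pi.single j 1 : ℕ → ℝ) n| ^ γ =
      |(Pi.single i 1 : ℕ → ℝ) n| ^ γ + |(Pi.single j 1 : ℕ → ℝ) n| ^ γ := by
    intro n
    rcases eq_or_ne n i with rfl | hi
    · simp [hij, zero_rpow hγ]
    · rcases eq_or_ne n j with rfl | hj <;> simp [*, zero_rpow hγ]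
  rw [lgNorm, tsum_congr hdisjoint, (memlg_single hγ i).tsum_add (memlg_single hγ j)]
  simp only [abs_single_rpow hγ, tsum_pi_single]
  norm_num

lemma two_rpow_sub_one_mem_innerEntropySet (hγ : 0 < γ) (n : ℕ) :
    (2 : ℝ) ^ (1 / γ - 1) ∈ innerEntropySet γ n := by
  refine ⟨by positivity, fun i => Pi.single (i : ℕ) 1,
    fun i => ⟨memlg_single hγ.ne' i, (lgNorm_single hγ.ne' i).le⟩, fun i j hij => ?_⟩
  rw [lgNorm_single_sub_single hγ.ne' (Fin.val_injective.ne hij), rpow_sub_one two_ne_zero]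
  linarith

end

theorem inner_entropy_lg_identity_general (γ : ℝ) (hγ : 0 < γ)
    (k : ℕ) :
    (2 : ℝ) ^ (1/γ - 1) ≤
      sSup {ε : ℝ | 0 < ε ∧ ∃ p : Fin (2 ^ (k - 1) + 1) → (ℕ → ℝ),
        (∀ i, Memlg γ (p i) ∧ lgNorm γ (p i) ≤ 1) ∧
        ∀ i j, i ≠ j → 2 * ε ≤ lgNorm γ (p i - p j)} :=
  le_csSup (innerEntropySet_bddAbove hγ (Nat.succ_le_succ Nat.one_le_two_pow))
    (two_rpow_sub_one_mem_innerEntropySet hγ _)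

theorem inner_entropy_lg_identity (γ : ℝ) (hγ : 0 < γ) (hγ1 : γ ≤ 1)
    (k : ℕ) (hk : 1 ≤ k) :
    (2 : ℝ) ^ (1/γ - 1) ≤
      sSup {ε : ℝ | 0 < ε ∧ ∃ p : Fin (2 ^ (k - 1) + 1) → (ℕ → ℝ),
        (∀ i, Memlg γ (p i) ∧ lgNorm γ (p i) ≤ 1) ∧
        ∀ i j, i ≠ j → 2 * ε ≤ lgNorm γ (p i - p j)} :=
  inner_entropy_lg_identity_general γ hγ k
end
end

section
/- For 0 < γ ≤ 1, define φ : ℝ² → [0,∞) by φ(x₁,x₂) = |x₁| + |x₂| if x₁x₂ ≤ 0 (i.e., x lies in the second or fourth closed quadrant), and φ(x₁,x₂) = (|x₁|^γ + |x₂|^γ)^{1/γ} if x₁x₂ > 0 (first or third open quadrant). Then φ is a γ-norm on ℝ², i.e., φ(x) = 0 iff x = 0, φ(λx) = |λ|φ(x), and φ(x+y)^γ ≤ φ(x)^γ + φ(y)^γ for all x, y ∈ ℝ². -/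
/-!
Write `ℓ₁(x) = |x₁| + |x₂|`. Since `t ↦ t ^ γ` is subadditive on `[0, ∞)`, `ℓ₁ ≤ φ`, with equality
on the closed second and fourth quadrants. If `x + y` lies there, the γ-triangle inequality follows
from the triangle inequality for `ℓ₁` and subadditivity of `t ↦ t ^ γ`. If `x + y` lies in the open
first quadrant (the third one follows by `φ(-x) = φ(x)`), the of_fst_nonpos point is that
`x₁⁺ ^ γ + x₂⁺ ^ γ ≤ φ(x) ^ γ` for every `x`: off the open first and third quadrants at most one
coordinate is positive. The left side is subadditive in `x` and equals `φ(x + y) ^ γ` there.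
-/

open scoped BigOperators ENNReal

noncomputable section

/-- The function `φ`: the `ℓ₁` norm on the second and fourth quadrants, the `ℓ_γ` norm
on the open first and third quadrants. -/
def phi (γ : ℝ) : ℝ × ℝ → ℝ := fun x =>
  if x.1 * x.2 ≤ 0 then |x.1| + |x.2|
  else (|x.1| ^ γ + |x.2| ^ γ) ^ (1/γ)

open Real

section Rpow

variable {γ : ℝ}

lemma posPart_add_le (a b : ℝ) : (a + b)⁺ ≤ a⁺ + b⁺ :=
  sup_le (add_le_add (le_posPart a) (le_posPart b))
    (add_nonneg (posPart_nonneg a) (posPart_nonneg b))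

lemma posPart_le_abs (a : ℝ) : a⁺ ≤ |a| :=
  sup_le (le_abs_self a) (abs_nonneg a)

lemma rpow_posPart_add_le (hγ0 : 0 ≤ γ) (hγ1 : γ ≤ 1) (a b : ℝ) :
    (a + b)⁺ ^ γ ≤ a⁺ ^ γ + b⁺ ^ γ :=
  (rpow_le_rpow (posPart_nonneg _) (posPart_add_le a b) hγ0).trans
    (rpow_add_le_add_rpow (posPart_nonneg a) (posPart_nonneg b) hγ0 hγ1)

lemma add_le_rpow_add_rpow_rpow_inv (hγ0 : 0 < γ) (hγ1 : γ ≤ 1) {a b : ℝ} (ha : 0 ≤ a)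
    (hb : 0 ≤ b) : a + b ≤ (a ^ γ + b ^ γ) ^ γ⁻¹ :=
  (le_rpow_inv_iff_of_pos (add_nonneg ha hb) (by positivity) hγ0).2
    (rpow_add_le_add_rpow ha hb hγ0.le hγ1)

end Rpow

section Phi

variable {γ : ℝ}

lemma phi_of_mul_nonpos {x : ℝ × ℝ} (hx : x.1 * x.2 ≤ 0) : phi γ x = |x.1| + |x.2| :=
  if_pos hx

lemma phi_of_mul_pos {x : ℝ × ℝ} (hx : 0 < x.1 * x.2) :
    phi γ x = (|x.1| ^ γ + |x.2| ^ γ) ^ γ⁻¹ := by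
  rw [phi, if_neg hx.not_ge, one_div]

lemma rpow_phi_of_mul_pos (hγ : γ ≠ 0) {x : ℝ × ℝ} (hx : 0 < x.1 * x.2) :
    phi γ x ^ γ = |x.1| ^ γ + |x.2| ^ γ := by
  rw [phi_of_mul_pos hx, rpow_inv_rpow (by positivity) hγ]

lemma phi_nonneg (γ : ℝ) (x : ℝ × ℝ) : 0 ≤ phi γ x := by
  unfold phi
  split_ifs <;> positivity

lemma phi_neg (x : ℝ × ℝ) : phi γ (-x) = phi γ x := by
  simp [phi, abs_neg]

lemma abs_add_abs_le_phi (hγ0 : 0 < γ) (hγ1 : γ ≤ 1) (x : ℝ × ℝ) : |x.1| + |x.2| ≤ phi γ x := by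
  rcases le_or_gt (x.1 * x.2) 0 with hx | hx
  · exact (phi_of_mul_nonpos hx).ge
  · rw [phi_of_mul_pos hx]
    exact add_le_rpow_add_rpow_rpow_inv hγ0 hγ1 (abs_nonneg _) (abs_nonneg _)

lemma phi_eq_zero_iff (hγ0 : 0 < γ) (hγ1 : γ ≤ 1) {x : ℝ × ℝ} : phi γ x = 0 ↔ x = 0 := by
  refine ⟨fun h => ?_, fun h => by simp [h, phi]⟩
  have hx := abs_add_abs_le_phi hγ0 hγ1 x
  have h1 := abs_nonneg x.1
  have h2 := abs_nonneg x.2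
  exact Prod.ext (abs_eq_zero.1 (by linarith)) (abs_eq_zero.1 (by linarith))

lemma phi_smul (hγ : γ ≠ 0) (a : ℝ) (x : ℝ × ℝ) : phi γ (a • x) = |a| * phi γ x := by
  rcases eq_or_ne a 0 with rfl | ha
  · simp [phi]
  have hsign : (a * x.1) * (a * x.2) ≤ 0 ↔ x.1 * x.2 ≤ 0 := by
    rw [show (a * x.1) * (a * x.2) = a ^ 2 * (x.1 * x.2) by ring]
    exact ⟨(nonpos_of_mul_nonpos_right · (by positivity)),
      mul_nonpos_of_nonneg_of_nonpos (sq_nonneg a)⟩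
  simp only [phi, Prod.smul_fst, Prod.smul_snd, smul_eq_mul, abs_mul, hsign]
  split_ifs
  · ring
  · rw [mul_rpow (abs_nonneg a) (abs_nonneg _), mul_rpow (abs_nonneg a) (abs_nonneg _), ← mul_add,
      mul_rpow (by positivity) (by positivity), one_div, rpow_rpow_inv (abs_nonneg a) hγ]

lemma rpow_posPart_add_rpow_posPart_le_rpow_phi (hγ : 0 < γ) (x : ℝ × ℝ) :
    x.1⁺ ^ γ + x.2⁺ ^ γ ≤ phi γ x ^ γ := by
  rcases le_or_gt (x.1 * x.2) 0 with hx | hx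
  · have of_fst_nonpos {a b : ℝ} (ha : a ≤ 0) : a⁺ ^ γ + b⁺ ^ γ ≤ (|a| + |b|) ^ γ := by
      rw [posPart_eq_zero.2 ha, zero_rpow hγ.ne', zero_add]
      gcongr
      exact (posPart_le_abs b).trans (le_add_of_nonneg_left (abs_nonneg a))
    rw [phi_of_mul_nonpos hx]
    rcases le_or_gt x.1 0 with h1 | h1
    · exact of_fst_nonpos h1
    · rw [add_comm, add_comm |x.1|]
      exact of_fst_nonpos (nonpos_of_mul_nonpos_right hx h1)
  · rw [rpow_phi_of_mul_pos hγ.ne' hx]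
    gcongr <;> exact posPart_le_abs _

lemma rpow_phi_add_le_of_pos (hγ0 : 0 < γ) (hγ1 : γ ≤ 1) {x y : ℝ × ℝ} (h1 : 0 < (x + y).1)
    (h2 : 0 < (x + y).2) : phi γ (x + y) ^ γ ≤ phi γ x ^ γ + phi γ y ^ γ := by
  have hx := rpow_posPart_add_rpow_posPart_le_rpow_phi hγ0 x
  have hy := rpow_posPart_add_rpow_posPart_le_rpow_phi hγ0 y
  have hs1 := rpow_posPart_add_le hγ0.le hγ1 x.1 y.1
  have hs2 := rpow_posPart_add_le hγ0.le hγ1 x.2 y.2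
  rw [rpow_phi_of_mul_pos hγ0.ne' (mul_pos h1 h2), abs_of_pos h1, abs_of_pos h2,
    ← posPart_eq_self.2 h1.le, ← posPart_eq_self.2 h2.le]
  simp only [Prod.fst_add, Prod.snd_add]
  linarith

lemma rpow_phi_add_le_of_mul_nonpos (hγ0 : 0 < γ) (hγ1 : γ ≤ 1) {x y : ℝ × ℝ}
    (h : (x + y).1 * (x + y).2 ≤ 0) : phi γ (x + y) ^ γ ≤ phi γ x ^ γ + phi γ y ^ γ := by
  have hle : phi γ (x + y) ≤ phi γ x + phi γ y :=
    calc phi γ (x + y) = |x.1 + y.1| + |x.2 + y.2| := phi_of_mul_nonpos h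
      _ ≤ (|x.1| + |x.2|) + (|y.1| + |y.2|) := by
        linarith [abs_add_le x.1 y.1, abs_add_le x.2 y.2]
      _ ≤ phi γ x + phi γ y :=
        add_le_add (abs_add_abs_le_phi hγ0 hγ1 x) (abs_add_abs_le_phi hγ0 hγ1 y)
  exact (rpow_le_rpow (phi_nonneg γ _) hle hγ0.le).trans
    (rpow_add_le_add_rpow (phi_nonneg γ x) (phi_nonneg γ y) hγ0.le hγ1)

lemma rpow_phi_add_le (hγ0 : 0 < γ) (hγ1 : γ ≤ 1) (x y : ℝ × ℝ) :
    phi γ (x + y) ^ γ ≤ phi γ x ^ γ + phi γ y ^ γ := by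
  rcases le_or_gt ((x + y).1 * (x + y).2) 0 with h | h
  · exact rpow_phi_add_le_of_mul_nonpos hγ0 hγ1 h
  rcases mul_pos_iff.1 h with ⟨h1, h2⟩ | ⟨h1, h2⟩
  · exact rpow_phi_add_le_of_pos hγ0 hγ1 h1 h2
  · have := rpow_phi_add_le_of_pos hγ0 hγ1 (x := -x) (y := -y)
      (by rw [← neg_add]; exact neg_pos.2 h1) (by rw [← neg_add]; exact neg_pos.2 h2)
    rwa [← neg_add, phi_neg, phi_neg, phi_neg] at this

end Phi

theorem phi_isGammaNorm (γ : ℝ) (hγ : 0 < γ) (hγ1 : γ ≤ 1) :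
    IsGammaNorm γ (phi γ) :=
  ⟨phi_nonneg γ, fun _ => phi_eq_zero_iff hγ hγ1, phi_smul hγ.ne', rpow_phi_add_le hγ hγ1⟩
end
end

section
/- For 0 < γ ≤ 1, define ω : ℝ² → [0,∞) by ω(x₁,x₂) = |x₁| if |x₁| > |x₂|, and ω(x₁,x₂) = (|(x₁+x₂)/2|^γ + |(x₁−x₂)/2|^γ)^{1/γ} if |x₁| ≤ |x₂|. Then ω is a γ-norm on ℝ². -/
open scoped BigOperators ENNReal

noncomputable section

/-- The rotated γ-norm `ω` on `ℝ²`. -/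
def omg (γ : ℝ) : ℝ × ℝ → ℝ := fun x =>
  if |x.2| < |x.1| then |x.1|
  else (|(x.1 + x.2)/2| ^ γ + |(x.1 - x.2)/2| ^ γ) ^ (1/γ)

/-!
Rotating by `-π/4` and scaling by `1/√2` turns `ω` into `φ`, the `ℓ₁` norm on the open second and
fourth quadrants and the `ℓ_γ` quasi-norm elsewhere, and injective linear maps pull γ-norms back to
γ-norms. For `φ`, the inequality `φ(p + q)^γ ≤ φ(p)^γ + φ(q)^γ` is subadditivity of `t ↦ t^γ`
unless `p` (say) lies in the `ℓ₁` region and `p + q` does not. Up to the symmetries `p ↦ p.swap`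
and `p ↦ -p` of `φ`, then `p.1 > 0 > p.2` and `p + q ≥ 0`, so `|p.2 + q.2| ≤ |q.2|`, while
`|p.1 + q.1|^γ` is paid for by `‖p‖₁^γ` together with what is left of `φ(q)^γ`.
-/

lemma abs_add_rpow_le {γ : ℝ} (hγ : 0 ≤ γ) (hγ1 : γ ≤ 1) (a b : ℝ) :
    |a + b| ^ γ ≤ |a| ^ γ + |b| ^ γ :=
  (Real.rpow_le_rpow (abs_nonneg _) (abs_add_le a b) hγ).trans
    (Real.rpow_add_le_add_rpow (abs_nonneg a) (abs_nonneg b) hγ hγ1)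

lemma IsGammaNorm.comp_injective {X Y : Type*} [AddCommGroup X] [Module ℝ X] [AddCommGroup Y]
    [Module ℝ Y] {γ : ℝ} {N : Y → ℝ} (hN : IsGammaNorm γ N) {f : X →ₗ[ℝ] Y}
    (hf : Function.Injective f) : IsGammaNorm γ (N ∘ f) := by
  obtain ⟨nonneg, eq_zero_iff, smul, rpow_add_le⟩ := hN
  refine ⟨fun x => nonneg (f x), fun x => ?_, fun a x => ?_, fun x y => ?_⟩
  · simp only [Function.comp_apply, eq_zero_iff, LinearMap.map_eq_zero_iff f hf]
  · simp only [Function.comp_apply, map_smul, smul]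
  · simpa only [Function.comp_apply, map_add] using rpow_add_le (f x) (f y)

/-- The paper's `φ`. -/
def quadrantNorm (γ : ℝ) (p : ℝ × ℝ) : ℝ :=
  if p.1 * p.2 < 0 then |p.1| + |p.2| else (|p.1| ^ γ + |p.2| ^ γ) ^ (1 / γ)

section quadrantNorm

variable {γ : ℝ}

lemma quadrantNorm_nonneg (p : ℝ × ℝ) : 0 ≤ quadrantNorm γ p := by
  unfold quadrantNorm; split <;> positivity

lemma quadrantNorm_rpow_of_mul_neg {p : ℝ × ℝ} (hp : p.1 * p.2 < 0) :
    quadrantNorm γ p ^ γ = (|p.1| + |p.2|) ^ γ := by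
  rw [quadrantNorm, if_pos hp]

lemma quadrantNorm_rpow_of_mul_nonneg (hγ : γ ≠ 0) {p : ℝ × ℝ} (hp : 0 ≤ p.1 * p.2) :
    quadrantNorm γ p ^ γ = |p.1| ^ γ + |p.2| ^ γ := by
  rw [quadrantNorm, if_neg hp.not_gt, one_div, Real.rpow_inv_rpow (by positivity) hγ]

lemma quadrantNorm_add_abs_rpow_le_rpow (hγ : 0 < γ) (hγ1 : γ ≤ 1) (p : ℝ × ℝ) :
    (|p.1| + |p.2|) ^ γ ≤ quadrantNorm γ p ^ γ := by
  rcases lt_or_ge (p.1 * p.2) 0 with hp | hp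
  · rw [quadrantNorm_rpow_of_mul_neg hp]
  · rw [quadrantNorm_rpow_of_mul_nonneg hγ.ne' hp]
    exact Real.rpow_add_le_add_rpow (abs_nonneg _) (abs_nonneg _) hγ.le hγ1

lemma quadrantNorm_eq_zero_iff (hγ : γ ≠ 0) (p : ℝ × ℝ) : quadrantNorm γ p = 0 ↔ p = 0 := by
  constructor
  · intro h
    have hl1 : |p.1| + |p.2| = 0 := by
      unfold quadrantNorm at h
      split at h
      · exact h
      · rw [Real.rpow_eq_zero (by positivity) (one_div_ne_zero hγ),
          add_eq_zero_iff_of_nonneg (by positivity) (by positivity),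
          Real.rpow_eq_zero (abs_nonneg _) hγ, Real.rpow_eq_zero (abs_nonneg _) hγ] at h
        rw [h.1, h.2, add_zero]
    rw [add_eq_zero_iff_of_nonneg (abs_nonneg _) (abs_nonneg _), abs_eq_zero, abs_eq_zero] at hl1
    exact Prod.ext hl1.1 hl1.2
  · rintro rfl
    simp [quadrantNorm, Real.zero_rpow hγ, Real.zero_rpow (inv_ne_zero hγ)]

lemma quadrantNorm_smul (hγ : γ ≠ 0) (a : ℝ) (p : ℝ × ℝ) :
    quadrantNorm γ (a • p) = |a| * quadrantNorm γ p := by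
  rcases eq_or_ne a 0 with rfl | ha
  · rw [zero_smul, (quadrantNorm_eq_zero_iff hγ _).mpr rfl, abs_zero, zero_mul]
  have hsign : (a * p.1) * (a * p.2) < 0 ↔ p.1 * p.2 < 0 := by
    rw [show (a * p.1) * (a * p.2) = a ^ 2 * (p.1 * p.2) by ring]
    exact smul_neg_iff_of_pos_left (by positivity : (0 : ℝ) < a ^ 2)
  simp only [quadrantNorm, Prod.smul_fst, Prod.smul_snd, smul_eq_mul, hsign, abs_mul]
  split
  · ring
  · rw [Real.mul_rpow (abs_nonneg a) (abs_nonneg _), Real.mul_rpow (abs_nonneg a) (abs_nonneg _),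
      ← mul_add, Real.mul_rpow (by positivity) (by positivity), ← Real.rpow_mul (abs_nonneg a),
      mul_one_div_cancel hγ, Real.rpow_one]

lemma quadrantNorm_neg (p : ℝ × ℝ) : quadrantNorm γ (-p) = quadrantNorm γ p := by
  simp [quadrantNorm]

lemma quadrantNorm_swap (p : ℝ × ℝ) : quadrantNorm γ p.swap = quadrantNorm γ p := by
  simp [quadrantNorm, mul_comm, add_comm]

lemma quadrantNorm_rpow_add_le_of_fourth_of_first (hγ : 0 < γ) (hγ1 : γ ≤ 1) {p q : ℝ × ℝ}
    (hp1 : 0 < p.1) (hp2 : p.2 < 0) (hpq1 : 0 ≤ p.1 + q.1) (hpq2 : 0 ≤ p.2 + q.2) :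
    quadrantNorm γ (p + q) ^ γ ≤ quadrantNorm γ p ^ γ + quadrantNorm γ q ^ γ := by
  have hq2 : 0 < q.2 := by linarith
  rw [quadrantNorm_rpow_of_mul_nonneg hγ.ne'
      (by simp only [Prod.fst_add, Prod.snd_add]; positivity),
    quadrantNorm_rpow_of_mul_neg (mul_neg_of_pos_of_neg hp1 hp2), Prod.fst_add, Prod.snd_add]
  have hsnd : |p.2 + q.2| ≤ |q.2| := by
    rw [abs_of_nonneg hpq2, abs_of_pos hq2]; linarith
  rcases lt_or_ge (q.1 * q.2) 0 with hq | hq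
  · have hq1 : q.1 < 0 := by nlinarith
    have hfst : |p.1 + q.1| ≤ |p.1| + |p.2| := by
      rw [abs_of_nonneg hpq1, abs_of_pos hp1]; linarith [abs_nonneg p.2]
    rw [quadrantNorm_rpow_of_mul_neg hq]
    gcongr
    linarith [abs_nonneg q.1]
  · rw [quadrantNorm_rpow_of_mul_nonneg hγ.ne' hq]
    calc |p.1 + q.1| ^ γ + |p.2 + q.2| ^ γ ≤ (|p.1| ^ γ + |q.1| ^ γ) + |q.2| ^ γ := by
          gcongr
          exact abs_add_rpow_le hγ.le hγ1 _ _
      _ ≤ (|p.1| + |p.2|) ^ γ + (|q.1| ^ γ + |q.2| ^ γ) := by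
          have : |p.1| ^ γ ≤ (|p.1| + |p.2|) ^ γ := by gcongr; linarith [abs_nonneg p.2]
          linarith

lemma quadrantNorm_rpow_add_le_of_fourth (hγ : 0 < γ) (hγ1 : γ ≤ 1) {p q : ℝ × ℝ}
    (hp1 : 0 < p.1) (hp2 : p.2 < 0) (hpq : 0 ≤ (p + q).1 * (p + q).2) :
    quadrantNorm γ (p + q) ^ γ ≤ quadrantNorm γ p ^ γ + quadrantNorm γ q ^ γ := by
  rw [Prod.fst_add, Prod.snd_add] at hpq
  rcases mul_nonneg_iff.mp hpq with ⟨hpq1, hpq2⟩ | ⟨hpq1, hpq2⟩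
  · exact quadrantNorm_rpow_add_le_of_fourth_of_first hγ hγ1 hp1 hp2 hpq1 hpq2
  · -- `p ↦ -p.swap` preserves `quadrantNorm` and the fourth quadrant, and swaps the first and third
    have h := quadrantNorm_rpow_add_le_of_fourth_of_first hγ hγ1 (p := -p.swap) (q := -q.swap)
      (neg_pos.mpr hp2) (neg_neg_iff_pos.mpr hp1)
      (by simp only [Prod.fst_neg, Prod.fst_swap]; linarith)
      (by simp only [Prod.snd_neg, Prod.snd_swap]; linarith)
    rwa [← neg_add, ← Prod.swap_add, quadrantNorm_neg, quadrantNorm_swap, quadrantNorm_neg,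
      quadrantNorm_swap, quadrantNorm_neg, quadrantNorm_swap] at h

lemma quadrantNorm_rpow_add_le_of_mul_neg (hγ : 0 < γ) (hγ1 : γ ≤ 1) {p q : ℝ × ℝ}
    (hp : p.1 * p.2 < 0) (hpq : 0 ≤ (p + q).1 * (p + q).2) :
    quadrantNorm γ (p + q) ^ γ ≤ quadrantNorm γ p ^ γ + quadrantNorm γ q ^ γ := by
  rcases mul_neg_iff.mp hp with ⟨hp1, hp2⟩ | ⟨hp1, hp2⟩
  · exact quadrantNorm_rpow_add_le_of_fourth hγ hγ1 hp1 hp2 hpq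
  · have h := quadrantNorm_rpow_add_le_of_fourth hγ hγ1 (p := p.swap) (q := q.swap) hp2 hp1
      (by simpa [mul_comm] using hpq)
    rwa [← Prod.swap_add, quadrantNorm_swap, quadrantNorm_swap, quadrantNorm_swap] at h

lemma quadrantNorm_rpow_add_le (hγ : 0 < γ) (hγ1 : γ ≤ 1) (p q : ℝ × ℝ) :
    quadrantNorm γ (p + q) ^ γ ≤ quadrantNorm γ p ^ γ + quadrantNorm γ q ^ γ := by
  rcases lt_or_ge ((p + q).1 * (p + q).2) 0 with hpq | hpq
  · rw [quadrantNorm_rpow_of_mul_neg hpq]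
    calc (|(p + q).1| + |(p + q).2|) ^ γ ≤ ((|p.1| + |p.2|) + (|q.1| + |q.2|)) ^ γ := by
          refine Real.rpow_le_rpow (by positivity) ?_ hγ.le
          simp only [Prod.fst_add, Prod.snd_add]
          linarith [abs_add_le p.1 q.1, abs_add_le p.2 q.2]
      _ ≤ (|p.1| + |p.2|) ^ γ + (|q.1| + |q.2|) ^ γ :=
          Real.rpow_add_le_add_rpow (by positivity) (by positivity) hγ.le hγ1
      _ ≤ quadrantNorm γ p ^ γ + quadrantNorm γ q ^ γ :=
          add_le_add (quadrantNorm_add_abs_rpow_le_rpow hγ hγ1 p)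
            (quadrantNorm_add_abs_rpow_le_rpow hγ hγ1 q)
  rcases lt_or_ge (p.1 * p.2) 0 with hp | hp
  · exact quadrantNorm_rpow_add_le_of_mul_neg hγ hγ1 hp hpq
  rcases lt_or_ge (q.1 * q.2) 0 with hq | hq
  · rw [add_comm p q, add_comm (quadrantNorm γ p ^ γ)]
    exact quadrantNorm_rpow_add_le_of_mul_neg hγ hγ1 hq (by rwa [add_comm])
  rw [quadrantNorm_rpow_of_mul_nonneg hγ.ne' hpq, quadrantNorm_rpow_of_mul_nonneg hγ.ne' hp,
    quadrantNorm_rpow_of_mul_nonneg hγ.ne' hq, Prod.fst_add, Prod.snd_add]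
  linarith [abs_add_rpow_le hγ.le hγ1 p.1 q.1, abs_add_rpow_le hγ.le hγ1 p.2 q.2]

lemma isGammaNorm_quadrantNorm (hγ : 0 < γ) (hγ1 : γ ≤ 1) : IsGammaNorm γ (quadrantNorm γ) :=
  ⟨quadrantNorm_nonneg, quadrantNorm_eq_zero_iff hγ.ne', quadrantNorm_smul hγ.ne',
    quadrantNorm_rpow_add_le hγ hγ1⟩

end quadrantNorm

def scaledRotation : ℝ × ℝ →ₗ[ℝ] ℝ × ℝ where
  toFun x := ((x.1 + x.2) / 2, (x.2 - x.1) / 2)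
  map_add' x y := by ext <;> simp only [Prod.fst_add, Prod.snd_add] <;> ring
  map_smul' a x := by ext <;> simp only [Prod.smul_fst, Prod.smul_snd, smul_eq_mul,
    RingHom.id_apply] <;> ring

lemma scaledRotation_injective : Function.Injective scaledRotation := by
  intro x y h
  simp only [scaledRotation, LinearMap.coe_mk, AddHom.coe_mk, Prod.mk.injEq] at h
  exact Prod.ext (by linarith [h.1, h.2]) (by linarith [h.1, h.2])

lemma omg_eq_quadrantNorm_comp (γ : ℝ) : omg γ = quadrantNorm γ ∘ scaledRotation := by
  funext x
  simp only [omg, quadrantNorm, Function.comp_apply, scaledRotation, LinearMap.coe_mk,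
    AddHom.coe_mk]
  have hsign : (x.1 + x.2) / 2 * ((x.2 - x.1) / 2) < 0 ↔ |x.2| < |x.1| := by
    rw [← sq_lt_sq]; constructor <;> intro h <;> nlinarith
  by_cases h : |x.2| < |x.1|
  · rw [if_pos h, if_pos (hsign.mpr h)]
    rcases mul_neg_iff.mp (hsign.mpr h) with ⟨h1, h2⟩ | ⟨h1, h2⟩
    · rw [abs_of_pos h1, abs_of_neg h2, abs_of_pos (by linarith : 0 < x.1)]; ring
    · rw [abs_of_neg h1, abs_of_pos h2, abs_of_neg (by linarith : x.1 < 0)]; ring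
  · rw [if_neg h, if_neg (mt hsign.mp h), ← neg_sub x.1 x.2, neg_div, abs_neg]

theorem omg_isGammaNorm (γ : ℝ) (hγ : 0 < γ) (hγ1 : γ ≤ 1) :
    IsGammaNorm γ (omg γ) := by
  rw [omg_eq_quadrantNorm_comp]
  exact (isGammaNorm_quadrantNorm hγ hγ1).comp_injective scaledRotation_injective
end
end

section
/- Let 0 < γ ≤ 1 and let ω be the γ-norm on ℝ² defined by ω(x₁,x₂) = |x₁| if |x₁| > |x₂| and ω(x₁,x₂) = (|(x₁+x₂)/2|^γ + |(x₁−x₂)/2|^γ)^{1/γ} if |x₁| ≤ |x₂|. Let T̃ : ℝ → (ℝ², ω) be defined by T̃(x) = (0, x). Then ‖T̃‖ = 2^{1/γ−1} and e₁(T̃) ≤ 1 = 2^{1−1/γ}‖T̃‖; in particular the constant 2^{1−1/γ} in the lower bound 2^{1−1/γ}‖T‖ ≤ e₁(T) is sharp. -/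
open scoped BigOperators ENNReal

noncomputable section

/-- The map `T̃ : ℝ → ℝ², x ↦ (0, x)`. -/
def Ttilde : ℝ →ₗ[ℝ] ℝ × ℝ := LinearMap.prod 0 LinearMap.id

lemma opNorm_eq_of_apply_eq_mul_abs {Y : Type*} [AddCommGroup Y] [Module ℝ Y] {N : Y → ℝ}
    {T : ℝ →ₗ[ℝ] Y} {c : ℝ} (hc : 0 ≤ c) (hT : ∀ x, N (T x) = c * |x|) :
    opNorm (fun t : ℝ => |t|) N T = c := by
  have hbound : ∀ r ∈ {r : ℝ | ∃ x : ℝ, |x| ≤ 1 ∧ r = N (T x)}, r ≤ c := by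
    rintro r ⟨x, hx, rfl⟩
    rw [hT]
    exact mul_le_of_le_one_right hc hx
  have hmem : c ∈ {r : ℝ | ∃ x : ℝ, |x| ≤ 1 ∧ r = N (T x)} :=
    ⟨1, by norm_num, by rw [hT, abs_one, mul_one]⟩
  exact le_antisymm (csSup_le ⟨c, hmem⟩ hbound) (le_csSup ⟨c, hbound⟩ hmem)

lemma entropy_one_le_of_forall_le {X Y : Type*} [AddCommGroup X] [Module ℝ X] [AddCommGroup Y]
    [Module ℝ Y] {NX : X → ℝ} {NY : Y → ℝ} {T : X →ₗ[ℝ] Y} {ε : ℝ} (hε : 0 < ε) (c : Y)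
    (hc : ∀ x, NX x ≤ 1 → NY (T x - c) ≤ ε) :
    entropy NX NY T 1 ≤ ε :=
  csInf_le ⟨0, fun _ hδ => hδ.1.le⟩ ⟨hε, fun _ => c, fun x hx => ⟨0, hc x hx⟩⟩

lemma Ttilde_apply (x : ℝ) : Ttilde x = (0, x) := rfl

lemma omg_zero_left {γ : ℝ} (hγ : γ ≠ 0) (x : ℝ) : omg γ (0, x) = 2 ^ (1 / γ - 1) * |x| := by
  have hhalf : (0 : ℝ) ≤ |x| / 2 := by positivity
  have hsum : |(0 + x) / 2| ^ γ + |(0 - x) / 2| ^ γ = 2 * (|x| / 2) ^ γ := by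
    rw [zero_add, zero_sub, neg_div, abs_neg, abs_div, abs_two]
    ring
  rw [omg, if_neg (by simp), hsum, Real.mul_rpow zero_le_two (Real.rpow_nonneg hhalf γ),
    ← Real.rpow_mul hhalf, mul_one_div_cancel hγ, Real.rpow_one,
    Real.rpow_sub zero_lt_two, Real.rpow_one]
  ring

lemma omg_neg_one_le_one {γ : ℝ} (hγ : γ ≠ 0) {x : ℝ} (hx : |x| ≤ 1) : omg γ (-1, x) ≤ 1 := by
  rw [omg]
  split_ifs with hlt
  · simp
  · -- the second branch is only reached at `x = ±1`, where one of the two summands vanishes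
    rcases abs_eq_abs.mp (le_antisymm hx (by simpa using hlt) |>.trans abs_one.symm) with rfl | rfl
    all_goals norm_num [Real.zero_rpow hγ]

theorem first_entropy_sharp_general (γ : ℝ) (hγ : 0 < γ) :
    opNorm (fun t : ℝ => |t|) (omg γ) Ttilde = (2 : ℝ) ^ (1/γ - 1) ∧
    entropy (fun t : ℝ => |t|) (omg γ) Ttilde 1 ≤ 1 ∧
    (1 : ℝ) = (2 : ℝ) ^ (1 - 1/γ) * opNorm (fun t : ℝ => |t|) (omg γ) Ttilde := by
  have hnorm : opNorm (fun t : ℝ => |t|) (omg γ) Ttilde = (2 : ℝ) ^ (1/γ - 1) :=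
    opNorm_eq_of_apply_eq_mul_abs (Real.rpow_nonneg zero_le_two _)
      fun x => omg_zero_left hγ.ne' x
  refine ⟨hnorm, ?_, ?_⟩
  · refine entropy_one_le_of_forall_le one_pos (1, 0) fun x hx => ?_
    simpa [Ttilde_apply] using omg_neg_one_le_one hγ.ne' hx
  · rw [hnorm, ← Real.rpow_add zero_lt_two]
    norm_num

theorem first_entropy_sharp (γ : ℝ) (hγ : 0 < γ) (hγ1 : γ ≤ 1) :
    opNorm (fun t : ℝ => |t|) (omg γ) Ttilde = (2 : ℝ) ^ (1/γ - 1) ∧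
    entropy (fun t : ℝ => |t|) (omg γ) Ttilde 1 ≤ 1 ∧
    (1 : ℝ) = (2 : ℝ) ^ (1 - 1/γ) * opNorm (fun t : ℝ => |t|) (omg γ) Ttilde :=
  first_entropy_sharp_general γ hγ
end
end

section
/- Let E be an n-dimensional γ-Banach space with a 1-unconditional basis satisfying condition (Q_γ): for all u, v ∈ [0,∞)ⁿ, sup_{x ∈ Q_{u,v}} ‖x‖_E^γ ≤ ‖u‖_E^γ + ‖v‖_E^γ, where Q_{u,v} = ∏_{i=1}^n [M_i − m_i, M_i + m_i] with m_i = min(u_i,v_i), M_i = max(u_i,v_i). Let X₁, ..., X_n be Banach spaces and define τ on ∏X_i by τ(x) = ‖(‖x₁‖, ..., ‖x_n‖)‖_E. Then τ is a γ-norm on ∏X_i. -/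
open scoped BigOperators ENNReal

noncomputable section

/- Each coordinate of `x + y` has norm between `|‖xᵢ‖ - ‖yᵢ‖|` and `‖xᵢ‖ + ‖yᵢ‖`, i.e. the norm profile
of `x + y` lies in the box `Q_{u,v}` spanned by the profiles `u`, `v` of `x` and `y`, so condition
`(Q_γ)` is exactly the γ-triangle inequality for `τ`. -/

theorem max_sub_min_norm_le_norm_add {F : Type*} [SeminormedAddCommGroup F] (a b : F) :
    max ‖a‖ ‖b‖ - min ‖a‖ ‖b‖ ≤ ‖a + b‖ := by
  calc max ‖a‖ ‖b‖ - min ‖a‖ ‖b‖ = |‖a‖ - ‖-b‖| := by rw [max_sub_min_eq_abs', norm_neg]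
    _ ≤ ‖a - -b‖ := abs_norm_sub_norm_le a (-b)
    _ = ‖a + b‖ := by rw [sub_neg_eq_add]

theorem norm_add_le_max_add_min {F : Type*} [SeminormedAddCommGroup F] (a b : F) :
    ‖a + b‖ ≤ max ‖a‖ ‖b‖ + min ‖a‖ ‖b‖ :=
  (max_add_min ‖a‖ ‖b‖).symm ▸ norm_add_le a b

section NormProfile

variable {ι : Type*} {E : ι → Type*}

theorem norm_profile_eq_zero_iff [∀ i, NormedAddCommGroup (E i)] (x : ∀ i, E i) :
    (fun i => ‖x i‖) = 0 ↔ x = 0 := by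
  simp only [funext_iff, Pi.zero_apply, norm_eq_zero]

theorem norm_profile_smul [∀ i, SeminormedAddCommGroup (E i)] [∀ i, NormedSpace ℝ (E i)]
    (a : ℝ) (x : ∀ i, E i) : (fun i => ‖(a • x) i‖) = |a| • fun i => ‖x i‖ := by
  funext i
  simp only [Pi.smul_apply, norm_smul, Real.norm_eq_abs, smul_eq_mul]

end NormProfile

theorem conditionQ_gives_gammaNorm_general (γ : ℝ) (n : ℕ)
    (N : (Fin n → ℝ) → ℝ) (hN : IsGammaNorm γ N)
    (hQ : ∀ u v : Fin n → ℝ, (∀ i, 0 ≤ u i) → (∀ i, 0 ≤ v i) →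
      ∀ x : Fin n → ℝ,
        (∀ i, max (u i) (v i) - min (u i) (v i) ≤ x i ∧
          x i ≤ max (u i) (v i) + min (u i) (v i)) →
        N x ^ γ ≤ N u ^ γ + N v ^ γ)
    (E : Fin n → Type*) [∀ i, NormedAddCommGroup (E i)] [∀ i, NormedSpace ℝ (E i)] :
    IsGammaNorm γ (fun x : (∀ i, E i) => N (fun i => ‖x i‖)) := by
  obtain ⟨hN_nonneg, hN_eq_zero, hN_smul, -⟩ := hN
  refine ⟨fun x => hN_nonneg _, fun x => ?_, fun a x => ?_, fun x y => ?_⟩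
  · rw [hN_eq_zero, norm_profile_eq_zero_iff]
  · beta_reduce
    rw [norm_profile_smul, hN_smul, abs_abs]
  · exact hQ _ _ (fun i => norm_nonneg (x i)) (fun i => norm_nonneg (y i)) _
      fun i => ⟨max_sub_min_norm_le_norm_add (x i) (y i), norm_add_le_max_add_min (x i) (y i)⟩

theorem conditionQ_gives_gammaNorm (γ : ℝ) (hγ : 0 < γ) (hγ1 : γ ≤ 1) (n : ℕ)
    (N : (Fin n → ℝ) → ℝ) (hN : IsGammaNorm γ N)
    (hUncond : ∀ a : Fin n → ℝ, N a = N (fun i => |a i|))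
    (hQ : ∀ u v : Fin n → ℝ, (∀ i, 0 ≤ u i) → (∀ i, 0 ≤ v i) →
      ∀ x : Fin n → ℝ,
        (∀ i, max (u i) (v i) - min (u i) (v i) ≤ x i ∧
          x i ≤ max (u i) (v i) + min (u i) (v i)) →
        N x ^ γ ≤ N u ^ γ + N v ^ γ)
    (E : Fin n → Type*) [∀ i, NormedAddCommGroup (E i)] [∀ i, NormedSpace ℝ (E i)]
    [∀ i, CompleteSpace (E i)] :
    IsGammaNorm γ (fun x : (∀ i, E i) => N (fun i => ‖x i‖)) :=
  conditionQ_gives_gammaNorm_general γ n N hN hQ E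
end
end
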